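/- Let E be a real inner product space of finite dimension d ≥ 2 and let 0 < ε₁ < ε₂ ≤ 1. Then there exist an integer M ≥ 1, Borel measurable maps φ, ψ : End(E) → {1,…,M}, and a subset A ⊆ {1,…,M} × {1,…,M} such that for all g, h ∈ End(E): if ‖g∘h‖ ≥ ε₂·‖g‖·‖h‖ then (φ(g), ψ(h)) ∈ A, and if (φ(g), ψ(h)) ∈ A then ‖g∘h‖ ≥ ε₁·‖g‖·‖h‖. -/

import Mathlib

open MeasureTheory Filter Topology
open scoped ENNReal NNReal

attribute [local instance] Classical.propDecidable

noncomputable section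

variable {E : Type*} [NormedAddCommGroup E] [InnerProductSpace ℝ E]
variable {F : Type*} [NormedAddCommGroup F] [InnerProductSpace ℝ F]

/-- The second singular value of a linear map between inner product spaces. -/
def secondSing (h : E →L[ℝ] F) : ℝ :=
  ⨆ P : {P : Submodule ℝ E // Module.finrank ℝ P = 2},
    ⨅ x : {x : E // x ∈ P.1 ∧ ‖x‖ = 1}, ‖h x.1‖

/-- The squeeze coefficient (logarithmic singular gap) of a linear map, in `[0,∞]`. -/
def sqz (h : E →L[ℝ] F) : ℝ≥0∞ :=
  if h = 0 then 0
  else if secondSing h = 0 then ⊤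
  else ENNReal.ofReal (Real.log (‖h‖ / secondSing h))

/-- Projective distance between the lines `[x]` and `[y]`. -/
def projDist (x y : E) : ℝ := (⨅ a : ℝ, ‖x - a • y‖) / ‖x‖

/-- The set `U^ε(h) = h (V^ε(h))`. -/
def Uset (ε : ℝ) (h : E →L[ℝ] F) : Set F :=
  h '' {x : E | ε * (‖h‖ * ‖x‖) ≤ ‖h x‖}

/-- `exp (-x)` for `x ∈ [0,∞]`, with `exp (-∞) = 0`. -/
def expNeg (x : ℝ≥0∞) : ℝ := if x = ⊤ then 0 else Real.exp (-x.toReal)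

/-- Quantitative proximality `prox g = liminf sqz (g^m) / m`. -/
def prox (g : E →L[ℝ] E) : ℝ≥0∞ :=
  Filter.atTop.liminf fun m : ℕ => sqz (g ^ m) / (m : ℝ≥0∞)

/-- The spectral radius `ρ₁ g = liminf ‖g^m‖^(1/m)`. -/
def rho1 (g : E →L[ℝ] E) : ℝ :=
  Filter.atTop.liminf fun m : ℕ => ‖g ^ m‖ ^ ((m : ℝ)⁻¹)

/-- `N g = log ‖g‖ + log ‖g⁻¹‖` (using `Ring.inverse`). -/
def Nfun (g : E →L[ℝ] E) : ℝ := Real.log ‖g‖ + Real.log ‖Ring.inverse g‖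

/-- The left-to-right product `γ̄ₙ = γ₀ ⋯ γ_{n-1}`. -/
def wprod (n : ℕ) (ω : ℕ → E →L[ℝ] E) : E →L[ℝ] E := ((List.range n).map ω).prod

variable [MeasurableSpace (E →L[ℝ] E)]

/-- `n`-fold convolution power `ν^{*n}` (law of `γ₀ ⋯ γ_{n-1}` for i.i.d. `γᵢ ∼ ν`). -/
def convPow (ν : Measure (E →L[ℝ] E)) : ℕ → Measure (E →L[ℝ] E)
  | 0 => Measure.dirac 1
  | n + 1 => (ν.prod (convPow ν n)).map fun p => p.1 * p.2

/-- Strong irreducibility of a measure on `End(E)`. -/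
def StronglyIrreducible (ν : Measure (E →L[ℝ] E)) : Prop :=
  (∀ (N : ℕ) (f : Fin (N + 1) → (E →L[ℝ] ℝ)) (v : E), (∀ i, f i ≠ 0) → v ≠ 0 →
      ∃ n : ℕ, 0 < convPow ν n {γ | (∏ i, f i (γ v)) ≠ 0}) ∧
  (∀ (N : ℕ) (f : E →L[ℝ] ℝ) (v : Fin (N + 1) → E), f ≠ 0 → (∀ j, v j ≠ 0) →
      ∃ n : ℕ, 0 < convPow ν n {γ | (∏ j, f (γ (v j))) ≠ 0})

/-- Proximality of a measure on `End(E)`. -/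
def ProximalMeasure (ν : Measure (E →L[ℝ] E)) : Prop :=
  (∀ n : ℕ, convPow ν n ({0} : Set (E →L[ℝ] E)) = 0) ∧
  ∃ n : ℕ, 0 < convPow ν n {γ | 0 < prox γ}

/-- `μ` is the law of an i.i.d. sequence of step distribution `ν`, i.e. `μ = ν^{⊗ℕ}`. -/
def IsIIDOf {A : Type*} [MeasurableSpace A] (μ : Measure (ℕ → A)) (ν : Measure A) : Prop :=
  ∀ (n : ℕ) (s : Fin n → Set A), (∀ i, MeasurableSet (s i)) →
    μ {ω | ∀ i : Fin n, ω i ∈ s i} = ∏ i, ν (s i)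

end

set_option maxHeartbeats 1000000
set_option synthInstance.maxHeartbeats 400000

open Metric in
/-- finitely described alignment relations. -/
theorem statement_17
    {E : Type*} [NormedAddCommGroup E] [InnerProductSpace ℝ E] [FiniteDimensional ℝ E]
    (hdim : 2 ≤ Module.finrank ℝ E)
    [MeasurableSpace (E →L[ℝ] E)] [BorelSpace (E →L[ℝ] E)]
    (ε₁ ε₂ : ℝ) (h1 : 0 < ε₁) (h12 : ε₁ < ε₂) (h2 : ε₂ ≤ 1) :
    ∃ M : ℕ, 1 ≤ M ∧
      ∃ φ ψ : (E →L[ℝ] E) → Fin M, ∃ A : Set (Fin M × Fin M),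
        Measurable φ ∧ Measurable ψ ∧
        ∀ g h : E →L[ℝ] E,
          (ε₂ * (‖g‖ * ‖h‖) ≤ ‖g * h‖ → (φ g, ψ h) ∈ A) ∧
          ((φ g, ψ h) ∈ A → ε₁ * (‖g‖ * ‖h‖) ≤ ‖g * h‖) := by
    classical
  set δ : ℝ := (ε₂ - ε₁) / 8 with hδdef
  have hδpos : 0 < δ := by rw [hδdef]; linarith
  have hδ1 : δ ≤ 1 := by rw [hδdef]; linarith
  -- finite δ-net of the unit sphere of End(E)
  have hcomp : IsCompact (Metric.sphere (0 : E →L[ℝ] E) 1) := isCompact_sphere 0 1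
  obtain ⟨t, htfin, hcov⟩ := (totallyBounded_iff).mp hcomp.totallyBounded δ hδpos
  haveI : Fintype t := htfin.fintype
  set k : ℕ := Fintype.card t with hk
  let e : t ≃ Fin k := Fintype.equivFin t
  let y : Fin k → (E →L[ℝ] E) := fun i => (e.symm i : E →L[ℝ] E)
  -- distance tests, open conditions
  let d : Fin k → (E →L[ℝ] E) → ℝ := fun i g => ‖g - ‖g‖ • y i‖
  have hdcont : ∀ i, Continuous (d i) := fun i =>
    (continuous_id.sub (continuous_norm.smul continuous_const)).norm
  let S : (E →L[ℝ] E) → Finset (Fin k) :=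
    fun g => Finset.univ.filter (fun i => d i g < δ * ‖g‖)
  let φ : (E →L[ℝ] E) → Fin (k + 1) :=
    fun g => if h : (S g).Nonempty then Fin.succ ((S g).min' h) else 0
  -- membership criterion for nonzero g
  have hmem : ∀ (g : E →L[ℝ] E), g ≠ 0 → ∀ i : Fin k,
      (i ∈ S g ↔ ‖(‖g‖⁻¹ • g) - y i‖ < δ) := by
    intro g hg i
    have hgn : (0:ℝ) < ‖g‖ := norm_pos_iff.2 hg
    have key : d i g = ‖g‖ * ‖(‖g‖⁻¹ • g) - y i‖ := by
      rw [← norm_smul_of_nonneg hgn.le, smul_sub, smul_smul,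
        mul_inv_cancel₀ hgn.ne', one_smul]
    simp only [S, Finset.mem_filter, Finset.mem_univ, true_and, key]
    rw [mul_comm δ ‖g‖]
    exact mul_lt_mul_iff_right₀ hgn
  -- S g nonempty for g ≠ 0
  have hSne : ∀ (g : E →L[ℝ] E), g ≠ 0 → (S g).Nonempty := by
    intro g hg
    have hgn : (0:ℝ) < ‖g‖ := norm_pos_iff.2 hg
    have hu : (‖g‖⁻¹ • g) ∈ Metric.sphere (0 : E →L[ℝ] E) 1 := by
      have tns := norm_smul_of_nonneg (inv_nonneg.2 hgn.le) g
      rw [Metric.mem_sphere, dist_zero_right, tns, inv_mul_cancel₀ hgn.ne']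
    obtain ⟨c, hct, hcball⟩ := Set.mem_iUnion₂.mp (hcov hu)
    refine ⟨e ⟨c, hct⟩, (hmem g hg _).2 ?_⟩
    have : y (e ⟨c, hct⟩) = c := by simp [y, e]
    rw [this, ← dist_eq_norm]
    exact Metric.mem_ball.mp hcball
  have hφ0 : ∀ g : E →L[ℝ] E, φ g = 0 → g = 0 := by
    intro g hg
    by_contra hg0
    have := hSne g hg0
    simp only [φ, dif_pos this] at hg
    exact Fin.succ_ne_zero _ hg
  have hφsucc : ∀ (g : E →L[ℝ] E) (i : Fin k), φ g = Fin.succ i → i ∈ S g := by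
    intro g i hgi
    by_cases hne : (S g).Nonempty
    · simp only [φ, dif_pos hne] at hgi
      have := Fin.succ_injective _ hgi.symm
      rw [this]; exact (S g).min'_mem hne
    · simp only [φ, dif_neg hne] at hgi
      exact absurd hgi.symm (Fin.succ_ne_zero _)
  -- measurability
  have hφmeas : Measurable φ := by
    apply measurable_to_countable'
    intro x
    induction x using Fin.cases with
    | zero =>
        have : φ ⁻¹' {0} = ⋂ i : Fin k, {g | δ * ‖g‖ ≤ d i g} := by
          ext g
          simp only [Set.mem_preimage, Set.mem_singleton_iff, Set.mem_iInter,
            Set.mem_setOf_eq]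
          constructor
          · intro hg i
            by_contra hlt
            push_neg at hlt
            have hne : (S g).Nonempty :=
              ⟨i, Finset.mem_filter.2 ⟨Finset.mem_univ _, hlt⟩⟩
            simp only [φ, dif_pos hne] at hg
            exact Fin.succ_ne_zero _ hg
          · intro hg
            have hne : ¬ (S g).Nonempty := by
              rintro ⟨i, hi⟩
              have := (Finset.mem_filter.mp hi).2
              exact absurd this (not_lt.2 (hg i))
            simp [φ, dif_neg hne]
        rw [this]
        exact MeasurableSet.iInter fun i =>
          (isClosed_le (continuous_const.mul continuous_norm) (hdcont i)).measurableSet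
    | succ i =>
        have : φ ⁻¹' {Fin.succ i} =
            {g | d i g < δ * ‖g‖} ∩ ⋂ j : Fin k, {g | j < i → δ * ‖g‖ ≤ d j g} := by
          ext g
          simp only [Set.mem_preimage, Set.mem_singleton_iff, Set.mem_inter_iff,
            Set.mem_iInter, Set.mem_setOf_eq]
          constructor
          · intro hg
            have hiS : i ∈ S g := hφsucc g i hg
            have hne : (S g).Nonempty := ⟨i, hiS⟩
            simp only [φ, dif_pos hne] at hg
            have hmin : (S g).min' hne = i := Fin.succ_injective _ hg
            refine ⟨(Finset.mem_filter.mp hiS).2, fun j hj => ?_⟩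
            by_contra hlt
            push_neg at hlt
            have hjS : j ∈ S g := Finset.mem_filter.2 ⟨Finset.mem_univ _, hlt⟩
            have := (S g).min'_le j hjS
            rw [hmin] at this
            exact absurd hj (not_lt.2 this)
          · rintro ⟨hi, hj⟩
            have hiS : i ∈ S g := Finset.mem_filter.2 ⟨Finset.mem_univ _, hi⟩
            have hne : (S g).Nonempty := ⟨i, hiS⟩
            have hmin : (S g).min' hne = i := by
              apply le_antisymm ((S g).min'_le i hiS)
              by_contra hlt
              push_neg at hlt
              have hm := (S g).min'_mem hne
              have := hj _ hlt
              exact absurd (Finset.mem_filter.mp hm).2 (not_lt.2 this)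
            simp [φ, dif_pos hne, hmin]
        rw [this]
        refine ((isOpen_lt (hdcont i) (continuous_const.mul continuous_norm)).measurableSet).inter
          (MeasurableSet.iInter fun j => ?_)
        by_cases hji : j < i
        · simp only [hji, forall_true_left]
          exact (isClosed_le (continuous_const.mul continuous_norm) (hdcont j)).measurableSet
        · have : {g : E →L[ℝ] E | j < i → δ * ‖g‖ ≤ d j g} = Set.univ := by
            ext g; simp [hji]
          rw [this]; exact MeasurableSet.univ
  -- the alignment set
  let A : Set (Fin (k+1) × Fin (k+1)) :=
    {p | p.1 = 0 ∨ p.2 = 0 ∨ ∃ i j : Fin k, p.1 = Fin.succ i ∧ p.2 = Fin.succ j ∧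
      ε₂ - 3 * δ ≤ ‖y i * y j‖}
  refine ⟨k + 1, Nat.le_add_left 1 k, φ, φ, A, hφmeas, hφmeas, ?_⟩
  -- key norm identity and Lipschitz bound
  have hlip : ∀ a b c dd : E →L[ℝ] E, ‖a * b - c * dd‖ ≤ ‖a - c‖ * ‖b‖ + ‖c‖ * ‖b - dd‖ := by
    intro a b c dd
    calc ‖a * b - c * dd‖ = ‖(a - c) * b + c * (b - dd)‖ := by
          congr 1
          rw [sub_mul, mul_sub]
          abel
      _ ≤ ‖(a - c) * b‖ + ‖c * (b - dd)‖ := norm_add_le _ _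
      _ ≤ ‖a - c‖ * ‖b‖ + ‖c‖ * ‖b - dd‖ := add_le_add (norm_mul_le _ _) (norm_mul_le _ _)
  have hφzero : φ (0 : E →L[ℝ] E) = 0 := by
    have hne : ¬ (S (0 : E →L[ℝ] E)).Nonempty := by
      rintro ⟨i, hi⟩
      have h2' := (Finset.mem_filter.mp hi).2
      simp only [d, norm_zero, zero_smul, sub_zero, mul_zero] at h2'
      exact absurd h2' (lt_irrefl 0)
    simp only [φ, dif_neg hne]
  intro g h
  by_cases hg0 : g = 0
  · subst hg0
    refine ⟨fun _ => Or.inl hφzero, fun _ => ?_⟩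
    rw [norm_zero, zero_mul, mul_zero]
    exact norm_nonneg _
  by_cases hh0 : h = 0
  · subst hh0
    refine ⟨fun _ => Or.inr (Or.inl hφzero), fun _ => ?_⟩
    rw [norm_zero, mul_zero, mul_zero]
    exact norm_nonneg _
  -- both nonzero
  have hgn : (0:ℝ) < ‖g‖ := norm_pos_iff.2 hg0
  have hhn : (0:ℝ) < ‖h‖ := norm_pos_iff.2 hh0
  set u : E →L[ℝ] E := ‖g‖⁻¹ • g with hu
  set v : E →L[ℝ] E := ‖h‖⁻¹ • h with hv
  have hun : ‖u‖ = 1 := by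
    have tns := norm_smul_of_nonneg (inv_nonneg.2 hgn.le) g
    rw [hu, tns, inv_mul_cancel₀ hgn.ne']
  have hvn : ‖v‖ = 1 := by
    have tns := norm_smul_of_nonneg (inv_nonneg.2 hhn.le) h
    rw [hv, tns, inv_mul_cancel₀ hhn.ne']
  have hkey : ‖g * h‖ = ‖g‖ * ‖h‖ * ‖u * v‖ := by
    have : u * v = (‖g‖⁻¹ * ‖h‖⁻¹) • (g * h) := by
      rw [hu, hv, smul_mul_assoc, mul_smul_comm, smul_smul]
    have tns := norm_smul_of_nonneg
      (show (0:ℝ) ≤ ‖g‖⁻¹ * ‖h‖⁻¹ by positivity) (g * h)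
    rw [this, tns]
    field_simp
  -- the indices
  obtain hSg' := hSne g hg0
  obtain hSh' := hSne h hh0
  set i : Fin k := (S g).min' hSg' with hi
  set j : Fin k := (S h).min' hSh' with hj
  have hφg : φ g = Fin.succ i := by simp only [φ]; rw [dif_pos hSg']
  have hφh : φ h = Fin.succ j := by simp only [φ]; rw [dif_pos hSh']
  have hdi : ‖u - y i‖ < δ := (hmem g hg0 i).1 ((S g).min'_mem hSg')
  have hdj : ‖v - y j‖ < δ := (hmem h hh0 j).1 ((S h).min'_mem hSh')
  have hyin : ‖y i‖ ≤ 1 + δ := by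
    calc ‖y i‖ = ‖u - (u - y i)‖ := by rw [sub_sub_cancel]
      _ ≤ ‖u‖ + ‖u - y i‖ := norm_sub_le _ _
      _ ≤ 1 + δ := by rw [hun]; linarith
  have hyjn : ‖y j‖ ≤ 1 + δ := by
    calc ‖y j‖ = ‖v - (v - y j)‖ := by rw [sub_sub_cancel]
      _ ≤ ‖v‖ + ‖v - y j‖ := norm_sub_le _ _
      _ ≤ 1 + δ := by rw [hvn]; linarith
  have hclose : ‖y i * y j - u * v‖ ≤ 3 * δ := by
    calc ‖y i * y j - u * v‖ ≤ ‖y i - u‖ * ‖y j‖ + ‖u‖ * ‖y j - v‖ := hlip _ _ _ _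
      _ ≤ δ * (1 + δ) + 1 * δ := by
          apply add_le_add
          · apply mul_le_mul _ hyjn (norm_nonneg _) hδpos.le
            rw [norm_sub_rev]; exact hdi.le
          · rw [hun, norm_sub_rev]
            exact mul_le_mul le_rfl hdj.le (norm_nonneg _) zero_le_one
      _ ≤ 3 * δ := by nlinarith
  constructor
  · intro halign
    right; right
    refine ⟨i, j, hφg, hφh, ?_⟩
    have huv : ε₂ ≤ ‖u * v‖ := by
      rw [hkey] at halign
      have := (mul_le_mul_iff_right₀ (mul_pos hgn hhn)).mp (by linarith [halign] : ‖g‖ * ‖h‖ * ε₂ ≤ ‖g‖ * ‖h‖ * ‖u * v‖)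
      exact this
    have : ‖u * v‖ - ‖y i * y j‖ ≤ 3 * δ := by
      calc ‖u * v‖ - ‖y i * y j‖ ≤ ‖u * v - y i * y j‖ := norm_sub_norm_le _ _
        _ = ‖y i * y j - u * v‖ := by rw [norm_sub_rev]
        _ ≤ 3 * δ := hclose
    linarith
  · intro hA
    rcases hA with h0 | h0 | ⟨i', j', hi', hj', hyy⟩
    · exact absurd (hφ0 g (hφg ▸ h0)) hg0
    · exact absurd (hφ0 h (hφh ▸ h0)) hh0
    · have hii : i' = i := Fin.succ_injective _ (hi' ▸ hφg ▸ rfl : Fin.succ i' = Fin.succ i)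
      have hjj : j' = j := Fin.succ_injective _ (hj' ▸ hφh ▸ rfl : Fin.succ j' = Fin.succ j)
      subst hii; subst hjj
      have : ‖y i * y j‖ - ‖u * v‖ ≤ 3 * δ := by
        calc ‖y i * y j‖ - ‖u * v‖ ≤ ‖y i * y j - u * v‖ := norm_sub_norm_le _ _
          _ ≤ 3 * δ := hclose
      have huv : ε₁ ≤ ‖u * v‖ := by
        have : ε₂ - 6 * δ ≤ ‖u * v‖ := by linarith
        have hd : ε₁ ≤ ε₂ - 6 * δ := by rw [hδdef]; linarith
        linarith
      rw [hkey]
      calc ε₁ * (‖g‖ * ‖h‖) ≤ ‖u * v‖ * (‖g‖ * ‖h‖) :=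
            mul_le_mul_of_nonneg_right huv (by positivity)
        _ = ‖g‖ * ‖h‖ * ‖u * v‖ := by ring
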